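/- arXiv:1810.01148 — 13 statements merged into one kernel-verified Lean document; each statement's English description precedes it below -/
import Mathlib

section
/- For integers σ ≥ 2 and σ' ≥ 2, one has P_σ ⊆ P_{σ'} if and only if (σ − 1) divides (σ' − 1). -/
/-- The Riemann–Hurwitz formula `σ - 1 = N (h - 1 + (1/2) Σ (1 - 1/mᵢ))`
as an equality of rational numbers. -/
def RHFormula (σ N h : ℕ) (m : List ℕ) : Prop :=
  (σ : ℚ) - 1 = (N : ℚ) * ((h : ℚ) - 1 + (1 / 2) * (m.map (fun x => 1 - 1 / (x : ℚ))).sum)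

/-- `(h; m₁, …, m_r)` is a potential signature for genus `σ`: each `mᵢ ≥ 2` and there is
a positive integer `N` with `mᵢ ∣ N` for all `i` satisfying the Riemann–Hurwitz formula. -/
def IsPotentialSignature (σ h : ℕ) (m : List ℕ) : Prop :=
  (∀ x ∈ m, 2 ≤ x) ∧ ∃ N : ℕ, 0 < N ∧ (∀ x ∈ m, x ∣ N) ∧ RHFormula σ N h m

/-- The set `P_σ` of potential signatures for genus `σ`, as a set of pairs `(h, [m₁, …, m_r])`. -/
def PotSig (σ : ℕ) : Set (ℕ × List ℕ) := {p | IsPotentialSignature σ p.1 p.2}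

/-- `P_σ ⊆ P_{σ'}` if and only if `(σ - 1) ∣ (σ' - 1)`. -/
theorem potSig_subset_iff_dvd (σ σ' : ℕ) (hσ : 2 ≤ σ) (hσ' : 2 ≤ σ') :
    PotSig σ ⊆ PotSig σ' ↔ (σ - 1) ∣ (σ' - 1) := by
  constructor
  · intro hsub
    have hmem : (σ, ([] : List ℕ)) ∈ PotSig σ := by
      refine ⟨by simp, 1, one_pos, by simp, ?_⟩
      simp [RHFormula]
    obtain ⟨-, N, hN, -, hRH⟩ := hsub hmem
    simp [RHFormula] at hRH
    refine ⟨N, ?_⟩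
    have h1 : ((σ' - 1 : ℕ) : ℚ) = ((σ - 1 : ℕ) : ℚ) * N := by
      rw [Nat.cast_sub (by omega : 1 ≤ σ), Nat.cast_sub (by omega : 1 ≤ σ')]
      push_cast
      linarith [hRH]
    exact_mod_cast h1
  · rintro ⟨k, hk⟩ p hp
    obtain ⟨hm, N, hN, hdvd, hRH⟩ := hp
    have hk0 : 0 < k := by
      rcases Nat.eq_zero_or_pos k with h | h
      · subst h; simp at hk; omega
      · exact h
    refine ⟨hm, k * N, Nat.mul_pos hk0 hN, fun x hx => (hdvd x hx).mul_left k, ?_⟩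
    unfold RHFormula at hRH ⊢
    have hcast : (σ' : ℚ) - 1 = (k : ℚ) * ((σ : ℚ) - 1) := by
      have h2 := congrArg (Nat.cast : ℕ → ℚ) hk
      rw [Nat.cast_sub (by omega : 1 ≤ σ'), Nat.cast_mul,
        Nat.cast_sub (by omega : 1 ≤ σ)] at h2
      push_cast at h2 ⊢
      linarith
    rw [hcast, hRH]; push_cast; ring
end

section
/- For integers σ ≥ 2, σ' ≥ 2 and Σ ≥ 2, if gcd(σ − 1, σ' − 1) = Σ − 1, then P_σ ∩ P_{σ'} = P_Σ. -/
/-!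
`(h; m) ∈ P_σ` says `σ - 1 = N T`, where `T` is the bracket of the Riemann–Hurwitz formula and
`N > 0` is a common multiple of the `mᵢ`. Scaling `N` gives `P_Σ ⊆ P_σ` whenever `Σ - 1 ∣ σ - 1`.
Conversely, if `σ - 1 = N T` and `σ' - 1 = N' T`, Bézout's `Σ - 1 = a (σ - 1) + b (σ' - 1)` gives
`Σ - 1 = (a N + b N') T`; here `a N + b N'` is again a common multiple, and positive since `T > 0`.
-/

namespace IsPotentialSignature

variable {σ S h : ℕ} {m : List ℕ}

theorem of_sub_one_dvd (hp : IsPotentialSignature S h m) (hσ : 2 ≤ σ) (hd : S - 1 ∣ σ - 1) :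
    IsPotentialSignature σ h m := by
  obtain ⟨hm, N, hN, hdvd, hrh⟩ := hp
  obtain ⟨c, hc⟩ := hd
  have hc0 : 0 < c := Nat.pos_of_ne_zero (by rintro rfl; omega)
  have hS : 0 < S := Nat.pos_of_ne_zero (by rintro rfl; omega)
  have hcast : (σ : ℚ) - 1 = ((S : ℚ) - 1) * c := by
    rw [← Nat.cast_pred (by omega), hc, Nat.cast_mul, Nat.cast_pred hS]
  refine ⟨hm, N * c, Nat.mul_pos hN hc0, fun x hx => (hdvd x hx).mul_right c, ?_⟩
  unfold RHFormula at hrh ⊢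
  rw [hcast, hrh]
  push_cast
  ring

theorem gcd_sub_one_add_one {σ' : ℕ} (hp : IsPotentialSignature σ h m)
    (hp' : IsPotentialSignature σ' h m) (hσ : 2 ≤ σ) (hσ' : 1 ≤ σ') :
    IsPotentialSignature (Nat.gcd (σ - 1) (σ' - 1) + 1) h m := by
  obtain ⟨hm, N, hN, hdvd, hrh⟩ := hp
  obtain ⟨-, N', -, hdvd', hrh'⟩ := hp'
  unfold RHFormula at hrh hrh'
  set T := (h : ℚ) - 1 + 1 / 2 * (m.map fun x => 1 - 1 / (x : ℚ)).sum
  set a := Nat.gcdA (σ - 1) (σ' - 1)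
  set b := Nat.gcdB (σ - 1) (σ' - 1)
  have hT : 0 < T := by
    refine pos_of_mul_pos_right (a := (N : ℚ)) ?_ (by positivity)
    rw [← hrh, sub_pos]
    exact_mod_cast hσ
  have hcomb : (Nat.gcd (σ - 1) (σ' - 1) : ℚ) = ((a * N + b * N' : ℤ) : ℚ) * T := by
    have hbezout := congrArg (Int.cast : ℤ → ℚ) (Nat.gcd_eq_gcd_ab (σ - 1) (σ' - 1))
    push_cast [Nat.cast_pred (by omega : 0 < σ), Nat.cast_pred (by omega : 0 < σ')] at hbezout
    rw [hbezout, hrh, hrh']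
    push_cast
    ring
  have hpos : 0 < a * N + b * N' := by
    have hgcd : (0 : ℚ) < Nat.gcd (σ - 1) (σ' - 1) := by
      exact_mod_cast Nat.gcd_pos_of_pos_left _ (by omega)
    exact_mod_cast pos_of_mul_pos_left (hcomb ▸ hgcd) hT.le
  lift a * N + b * N' to ℕ using hpos.le with N'' hN''
  refine ⟨hm, N'', by exact_mod_cast hpos, fun x hx => ?_, ?_⟩
  · have hx : (x : ℤ) ∣ N'' := hN'' ▸ dvd_add
      (dvd_mul_of_dvd_right (Int.natCast_dvd_natCast.mpr (hdvd x hx)) a)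
      (dvd_mul_of_dvd_right (Int.natCast_dvd_natCast.mpr (hdvd' x hx)) b)
    exact Int.natCast_dvd_natCast.mp hx
  · change _ = _ * T
    push_cast
    rw [hcomb]
    push_cast
    ring

end IsPotentialSignature

/-- If `gcd(σ - 1, σ' - 1) = Σ - 1`, then `P_σ ∩ P_{σ'} = P_Σ`. -/
theorem potSig_inter_eq_of_gcd (σ σ' S : ℕ) (hσ : 2 ≤ σ) (hσ' : 2 ≤ σ') (hS : 2 ≤ S)
    (hgcd : Nat.gcd (σ - 1) (σ' - 1) = S - 1) :
    PotSig σ ∩ PotSig σ' = PotSig S := by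
  ext ⟨h, m⟩
  constructor
  · rintro ⟨hp, hp'⟩
    have hpS := hp.gcd_sub_one_add_one hp' hσ (by omega)
    rwa [hgcd, Nat.sub_add_cancel (by omega)] at hpS
  · intro hp
    exact ⟨hp.of_sub_one_dvd hσ (hgcd ▸ Nat.gcd_dvd_left _ _),
      hp.of_sub_one_dvd hσ' (hgcd ▸ Nat.gcd_dvd_right _ _)⟩
end

section
/- Let σ ≥ 2, σ' ≥ 2 be integers and let Σ ≥ 2 satisfy Σ − 1 = lcm(σ − 1, σ' − 1). Then P_σ ⊆ P_Σ and P_{σ'} ⊆ P_Σ; moreover, for any integer Σ' ≥ 2 such that P_σ ⊆ P_{Σ'} and P_{σ'} ⊆ P_{Σ'}, one has (Σ − 1) divides (Σ' − 1). -/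
lemma potSig_mono {σ S : ℕ} (hσ : 2 ≤ σ) (hS : 2 ≤ S) (hd : (σ - 1) ∣ (S - 1)) :
    PotSig σ ⊆ PotSig S := by
  rintro ⟨h, m⟩ ⟨hm, N, hN, hdvd, hRH⟩
  obtain ⟨k, hk⟩ := hd
  have hk0 : 0 < k := by
    rcases Nat.eq_zero_or_pos k with h0 | h0
    · subst h0; simp at hk; omega
    · exact h0
  refine ⟨hm, k * N, by positivity,
    fun x hx => (hdvd x hx).trans (Dvd.intro_left k rfl), ?_⟩
  unfold RHFormula at hRH ⊢
  have hcast : (S : ℚ) - 1 = ((σ : ℚ) - 1) * k := by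
    have h1 : ((S - 1 : ℕ) : ℚ) = (((σ - 1) * k : ℕ) : ℚ) := by rw [hk]
    push_cast [Nat.cast_sub (show 1 ≤ S by omega), Nat.cast_sub (show 1 ≤ σ by omega)] at h1
    linarith
  rw [hcast, hRH]
  push_cast
  ring

lemma potSig_dvd {σ S' : ℕ} (hσ : 2 ≤ σ) (hsub : PotSig σ ⊆ PotSig S') :
    (σ - 1) ∣ (S' - 1) := by
  have hmem : (σ, ([] : List ℕ)) ∈ PotSig σ := by
    refine ⟨by simp, 1, one_pos, by simp, ?_⟩
    simp [RHFormula]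
  obtain ⟨-, N, hN, -, hRH⟩ := hsub hmem
  simp [RHFormula] at hRH
  have hσQ : (2 : ℚ) ≤ (σ : ℚ) := by exact_mod_cast hσ
  have hNQ : (1 : ℚ) ≤ (N : ℚ) := by exact_mod_cast hN
  have hS'1 : 1 ≤ S' := by
    by_contra hc
    have h0 : S' = 0 := by omega
    subst h0
    simp only [Nat.cast_zero] at hRH
    nlinarith
  refine ⟨N, ?_⟩
  have hq : ((S' - 1 : ℕ) : ℚ) = (((σ - 1) * N : ℕ) : ℚ) := by
    push_cast [Nat.cast_sub hS'1, Nat.cast_sub (show 1 ≤ σ by omega)]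
    linarith
  exact_mod_cast hq

/-- If `Σ - 1 = lcm(σ - 1, σ' - 1)`, then `P_Σ` contains both `P_σ` and `P_{σ'}`, and for
any `Σ' ≥ 2` with this containment property, `(Σ - 1) ∣ (Σ' - 1)`. -/
theorem potSig_join (σ σ' S : ℕ) (hσ : 2 ≤ σ) (hσ' : 2 ≤ σ') (hS : 2 ≤ S)
    (hlcm : S - 1 = Nat.lcm (σ - 1) (σ' - 1)) :
    PotSig σ ⊆ PotSig S ∧ PotSig σ' ⊆ PotSig S ∧
      ∀ S' : ℕ, 2 ≤ S' → PotSig σ ⊆ PotSig S' → PotSig σ' ⊆ PotSig S' →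
        (S - 1) ∣ (S' - 1) := by
  refine ⟨potSig_mono hσ hS (hlcm ▸ Nat.dvd_lcm_left _ _),
    potSig_mono hσ' hS (hlcm ▸ Nat.dvd_lcm_right _ _), fun S' hS' h1 h2 => ?_⟩
  rw [hlcm]
  exact Nat.lcm_dvd (potSig_dvd hσ h1) (potSig_dvd hσ' h2)
end

section
/- The intersection over all integers σ ≥ 2 of the sets P_σ of potential signatures equals P_2; that is, ⋂_{σ ≥ 2} P_σ = P_2. -/
/-- The intersection over all `σ ≥ 2` of the sets `P_σ` equals `P_2`. -/
theorem iInter_potSig_eq_potSig_two :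
    (⋂ (σ : ℕ) (_ : 2 ≤ σ), PotSig σ) = PotSig 2 := by
  ext p
  simp only [Set.mem_iInter]
  constructor
  · intro h
    exact h 2 le_rfl
  · rintro ⟨hm, N, hN, hdvd, hrh⟩ σ hσ
    refine ⟨hm, (σ - 1) * N, ?_, fun x hx => (hdvd x hx).mul_left _, ?_⟩
    · exact Nat.mul_pos (by omega) hN
    · unfold RHFormula at hrh ⊢
      have h1 : ((σ - 1 : ℕ) : ℚ) = (σ : ℚ) - 1 := by
        push_cast [Nat.cast_sub (by omega : 1 ≤ σ)]; ring
      push_cast [h1]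
      rw [mul_assoc, ← hrh]
      norm_num
end

section
/- Let X be a set of integers, each at least 2, which contains two consecutive integers n and n + 1 for some n ≥ 2. Then ⋂_{σ ∈ X} P_σ = P_2. -/
/-- If `X` is a set of integers at least 2 containing two consecutive integers `n, n + 1`
with `n ≥ 2`, then the intersection of the sets `P_σ` over `σ ∈ X` equals `P_2`. -/
theorem iInter_potSig_of_consecutive (X : Set ℕ) (hX : ∀ σ ∈ X, 2 ≤ σ)
    (n : ℕ) (hn : 2 ≤ n) (hnX : n ∈ X) (hn1X : n + 1 ∈ X) :
    (⋂ σ ∈ X, PotSig σ) = PotSig 2 := by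
  have hsub : ∀ σ : ℕ, 2 ≤ σ → PotSig 2 ⊆ PotSig σ := by
    intro σ hσ p hp
    obtain ⟨hm, N, hN, hdvd, hRH⟩ := hp
    refine ⟨hm, N * (σ - 1), Nat.mul_pos hN (by omega), fun x hx => (hdvd x hx).mul_right _, ?_⟩
    unfold RHFormula at hRH ⊢
    have hcast : ((σ - 1 : ℕ) : ℚ) = (σ : ℚ) - 1 := by
      have : 1 ≤ σ := le_trans one_le_two hσ
      push_cast [this]; ring
    push_cast [hcast] at hRH ⊢
    linear_combination ((σ : ℚ) - 1) * hRH
  ext p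
  simp only [Set.mem_iInter]
  constructor
  · intro hp
    obtain ⟨hm, N, hN, hdvd, hRH⟩ := hp n hnX
    obtain ⟨_, N', hN', hdvd', hRH'⟩ := hp (n + 1) hn1X
    unfold RHFormula at hRH hRH'
    set E : ℚ := (p.1 : ℚ) - 1 + (1 / 2) * (p.2.map (fun x => 1 - 1 / (x : ℚ))).sum with hE
    have h1 : (N : ℚ) * E = (n : ℚ) - 1 := hRH.symm
    have h2 : (N' : ℚ) * E = (n : ℚ) := by push_cast at hRH'; linarith
    have hn1 : (1 : ℚ) ≤ (n : ℚ) - 1 := by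
      have : (2 : ℚ) ≤ (n : ℚ) := by exact_mod_cast hn
      linarith
    have hEpos : 0 < E := by
      rcases lt_or_ge 0 E with h | h
      · exact h
      · exfalso
        have : (N : ℚ) * E ≤ 0 := mul_nonpos_of_nonneg_of_nonpos (by positivity) h
        linarith
    have hlt : N < N' := by
      have : (N : ℚ) < (N' : ℚ) := by nlinarith
      exact_mod_cast this
    refine ⟨hm, N' - N, Nat.sub_pos_of_lt hlt, fun x hx => Nat.dvd_sub (hdvd' x hx) (hdvd x hx), ?_⟩
    unfold RHFormula
    have hcast : ((N' - N : ℕ) : ℚ) = (N' : ℚ) - N := by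
      push_cast [hlt.le]; ring
    rw [hcast, ← hE]
    push_cast
    nlinarith [h1, h2]
  · intro hp σ hσ
    exact hsub σ (hX σ hσ) hp
end

section
/- For every integer σ ≥ 2, the set P_σ of potential signatures for genus σ is finite. -/
/-!
Write `A = h - 1 + ½ Σ (1 - 1/mᵢ)`, so that the Riemann–Hurwitz formula reads `σ - 1 = N A`
and forces `A > 0`. Hurwitz's case analysis shows that a positive `A` is at least `1/84`
(attained by `(0; 2, 3, 7)`). Hence `N ≤ 84 (σ - 1)`, which bounds every `mᵢ ∣ N`, while
`A ≤ σ - 1` together with `1 - 1/mᵢ ≥ 1/2` bounds `h` and `r`.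
-/

theorem one_div_natCast_le {x k : ℕ} (hk : 0 < k) (h : k ≤ x) : 1 / (x : ℚ) ≤ 1 / k :=
  one_div_le_one_div_of_le (by exact_mod_cast hk) (by exact_mod_cast h)

theorem one_div_le_one_div_succ_of_lt {x k : ℕ} (hk : 0 < k) (h : 1 / (x : ℚ) < 1 / k) :
    1 / (x : ℚ) ≤ 1 / (k + 1) := by
  rcases Nat.eq_zero_or_pos x with rfl | hx
  · simp only [CharP.cast_eq_zero, div_zero]; positivity
  have hkx : k < x := by exact_mod_cast (one_div_lt_one_div (by positivity) (by positivity)).mp h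
  exact one_div_le_one_div_of_le (by positivity) (by exact_mod_cast hkx)

theorem List.finite_length_le_forall_le (L M : ℕ) :
    {l : List ℕ | l.length ≤ L ∧ ∀ x ∈ l, x ≤ M}.Finite := by
  refine ((List.finite_length_le (Fin (M + 1)) L).image (List.map Fin.val)).subset ?_
  rintro l ⟨hl, hM⟩
  refine ⟨l.map (Fin.ofNat (M + 1)), by simpa using hl, ?_⟩
  rw [List.map_map]
  conv_rhs => rw [← List.map_id l]
  exact List.map_congr_left fun x hx => Nat.mod_eq_of_lt (Nat.lt_succ_of_le (hM x hx))

namespace PotentialSignature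

def branchSum (m : List ℕ) : ℚ := (m.map fun x : ℕ => 1 - 1 / (x : ℚ)).sum

/-- Minus half the orbifold Euler characteristic `2 - 2h - Σ (1 - 1/mᵢ)` of the signature. -/
def area (h : ℕ) (m : List ℕ) : ℚ := h - 1 + 1 / 2 * branchSum m

theorem rhFormula_iff {σ N h : ℕ} {m : List ℕ} :
    RHFormula σ N h m ↔ (σ : ℚ) - 1 = N * area h m := by
  -- `RHFormula` maps over `m` coerced to `List ℚ`, a monadic lift.
  simp only [RHFormula, area, branchSum, bind_pure_comp, List.map_eq_map, List.map_map]
  rfl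

@[simp] theorem branchSum_nil : branchSum [] = 0 := rfl

@[simp] theorem branchSum_cons (a : ℕ) (m : List ℕ) :
    branchSum (a :: m) = 1 - 1 / (a : ℚ) + branchSum m := by
  simp [branchSum]

theorem branchSum_perm {m m' : List ℕ} (hp : m.Perm m') : branchSum m = branchSum m' := by
  unfold branchSum
  exact (hp.map (fun x : ℕ => 1 - 1 / (x : ℚ))).sum_eq

theorem branchSum_le_length (m : List ℕ) : branchSum m ≤ m.length := by
  induction m with
  | nil => simp
  | cons a m ih =>
    have : 0 ≤ 1 / (a : ℚ) := by positivity
    simp only [branchSum_cons, List.length_cons, Nat.cast_succ]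
    linarith

theorem length_div_two_le_branchSum {m : List ℕ} (hm : ∀ x ∈ m, 2 ≤ x) :
    (m.length : ℚ) / 2 ≤ branchSum m := by
  induction m with
  | nil => simp
  | cons a m ih =>
    have ha := one_div_natCast_le two_pos (hm a List.mem_cons_self)
    have := ih fun x hx => hm x (List.mem_cons_of_mem a hx)
    simp only [branchSum_cons, List.length_cons, Nat.cast_succ]
    linarith

-- The bound is attained at `(a, b, c) = (2, 3, 7)`.
theorem one_div_add_one_div_add_one_div_le {a b c : ℕ} (ha : 2 ≤ a) (hab : a ≤ b)
    (hbc : b ≤ c) (h : 1 / (a : ℚ) + 1 / b + 1 / c < 1) :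
    1 / (a : ℚ) + 1 / b + 1 / c ≤ 41 / 42 := by
  have hc : 0 ≤ 1 / (c : ℚ) := by positivity
  rcases (by omega : a = 2 ∨ a = 3 ∨ 4 ≤ a) with rfl | rfl | ha4
  · rcases (by omega : b = 2 ∨ b = 3 ∨ b = 4 ∨ 5 ≤ b) with rfl | rfl | rfl | hb5
    · norm_num at h; linarith
    · have := one_div_le_one_div_succ_of_lt (x := c) (k := 6) (by norm_num)
        (by push_cast at h ⊢; linarith)
      push_cast at this ⊢; linarith
    · have := one_div_le_one_div_succ_of_lt (x := c) (k := 4) (by norm_num)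
        (by push_cast at h ⊢; linarith)
      push_cast at this ⊢; linarith
    · have := one_div_natCast_le (by norm_num) hb5
      have := one_div_natCast_le (by norm_num) (hb5.trans hbc)
      push_cast at *; linarith
  · rcases (by omega : b = 3 ∨ 4 ≤ b) with rfl | hb4
    · have := one_div_le_one_div_succ_of_lt (x := c) (k := 3) (by norm_num)
        (by push_cast at h ⊢; linarith)
      push_cast at this ⊢; linarith
    · have := one_div_natCast_le (by norm_num) hb4
      have := one_div_natCast_le (by norm_num) (hb4.trans hbc)
      push_cast at *; linarith
  · have := one_div_natCast_le (by norm_num) ha4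
    have := one_div_natCast_le (by norm_num) (ha4.trans hab)
    have := one_div_natCast_le (by norm_num) ((ha4.trans hab).trans hbc)
    push_cast at *; linarith

theorem two_add_one_div_42_le_branchSum_of_sorted {m : List ℕ} (hm : ∀ x ∈ m, 2 ≤ x)
    (hsort : m.Pairwise (· ≤ ·)) (h : 2 < branchSum m) : 2 + 1 / 42 ≤ branchSum m := by
  rcases (by omega : m.length ≤ 2 ∨ m.length = 3 ∨ m.length = 4 ∨ 5 ≤ m.length)
    with hr | hr | hr | hr
  · have : (m.length : ℚ) ≤ 2 := by exact_mod_cast hr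
    linarith [branchSum_le_length m]
  · obtain ⟨a, b, c, rfl⟩ := List.length_eq_three.mp hr
    have ha : 2 ≤ a := hm a (by simp)
    obtain ⟨hab, hbc⟩ : a ≤ b ∧ b ≤ c := by grind
    simp only [branchSum_cons, branchSum_nil] at h ⊢
    have := one_div_add_one_div_add_one_div_le ha hab hbc (by linarith)
    linarith
  · obtain ⟨a, b, c, d, rfl⟩ := List.length_eq_four.mp hr
    obtain ⟨ha, hb, hc, hd⟩ : 2 ≤ a ∧ 2 ≤ b ∧ 2 ≤ c ∧ 2 ≤ d := by simpa using hm
    simp only [branchSum_cons, branchSum_nil] at h ⊢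
    rcases (by omega : d = 2 ∨ 3 ≤ d) with rfl | hd
    · obtain ⟨rfl, rfl, rfl⟩ : a = 2 ∧ b = 2 ∧ c = 2 := by grind
      norm_num at h
    · have := one_div_natCast_le two_pos ha
      have := one_div_natCast_le two_pos hb
      have := one_div_natCast_le two_pos hc
      have := one_div_natCast_le three_pos hd
      push_cast at *
      linarith
  · have : (5 : ℚ) ≤ m.length := by exact_mod_cast hr
    linarith [length_div_two_le_branchSum hm]

theorem two_add_one_div_42_le_branchSum {m : List ℕ} (hm : ∀ x ∈ m, 2 ≤ x)
    (h : 2 < branchSum m) : 2 + 1 / 42 ≤ branchSum m := by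
  have hp := List.perm_insertionSort (· ≤ ·) m
  rw [← branchSum_perm hp] at h ⊢
  exact two_add_one_div_42_le_branchSum_of_sorted (fun x hx => hm x (hp.subset hx))
    (List.pairwise_insertionSort _ m) h

theorem one_div_84_le_area {h : ℕ} {m : List ℕ} (hm : ∀ x ∈ m, 2 ≤ x)
    (hpos : 0 < area h m) : 1 / 84 ≤ area h m := by
  unfold area at *
  rcases h with _ | h
  · have := two_add_one_div_42_le_branchSum hm (by push_cast at hpos; linarith)
    push_cast; linarith
  rcases eq_or_ne m [] with rfl | hne
  · simp only [branchSum_nil, Nat.cast_add, Nat.cast_one, add_sub_cancel_right, mul_zero,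
      add_zero, Nat.cast_pos] at hpos ⊢
    have : (1 : ℚ) ≤ h := Nat.one_le_cast.mpr hpos
    linarith
  · have hlen : (1 : ℚ) ≤ m.length := by exact_mod_cast List.length_pos_iff.mpr hne
    have := length_div_two_le_branchSum hm
    push_cast; linarith [(h.cast_nonneg : (0 : ℚ) ≤ h)]

end PotentialSignature

open PotentialSignature

section
variable {σ N h : ℕ} {m : List ℕ}

theorem RHFormula.area_pos (hσ : 2 ≤ σ) (hRH : RHFormula σ N h m) : 0 < area h m := by
  have hσ' : (2 : ℚ) ≤ σ := by exact_mod_cast hσ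
  rw [rhFormula_iff] at hRH
  exact pos_of_mul_pos_right (by linarith) N.cast_nonneg

theorem IsPotentialSignature.bounds (hσ : 2 ≤ σ) (hsig : IsPotentialSignature σ h m) :
    h ≤ σ ∧ m.length ≤ 4 * σ ∧ ∀ x ∈ m, x ≤ 84 * σ := by
  obtain ⟨hm, N, hN, hdvd, hRH⟩ := hsig
  have hA := hRH.area_pos hσ
  rw [rhFormula_iff] at hRH
  have hAσ : area h m ≤ σ - 1 := hRH ▸ le_mul_of_one_le_left hA.le (by exact_mod_cast hN)
  have hNσ : (N : ℚ) ≤ 84 * (σ - 1) := by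
    have := mul_le_mul_of_nonneg_left (one_div_84_le_area hm hA) N.cast_nonneg
    linarith
  have hS := length_div_two_le_branchSum hm
  unfold area at hAσ
  refine ⟨?_, ?_, fun x hx => ?_⟩
  · have : (h : ℚ) ≤ σ := by linarith [(m.length.cast_nonneg : (0 : ℚ) ≤ m.length)]
    exact_mod_cast this
  · have : (m.length : ℚ) ≤ 4 * σ := by linarith [(h.cast_nonneg : (0 : ℚ) ≤ h)]
    exact_mod_cast this
  · have : (x : ℚ) ≤ N := by exact_mod_cast Nat.le_of_dvd hN (hdvd x hx)
    have : (x : ℚ) ≤ 84 * σ := by linarith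
    exact_mod_cast this

end

/-- For every `σ ≥ 2`, the set `P_σ` of potential signatures is finite. -/
theorem potSig_finite (σ : ℕ) (hσ : 2 ≤ σ) : (PotSig σ).Finite :=
  ((Set.finite_Iic σ).prod (List.finite_length_le_forall_le (4 * σ) (84 * σ))).subset
    fun _ hsig => hsig.bounds hσ
end

section
/- If (h; m_1, …, m_r) is a potential signature for genus σ ≥ 2 witnessed by a positive integer N (so that m_i ∣ N for all i and σ − 1 = N·(h − 1 + (1/2)·∑_{i=1}^r (1 − 1/m_i))), then N ≤ 84·(σ − 1). -/
lemma hw_inv_le {x k : ℕ} (hk : 0 < k) (hx : k ≤ x) : (1 : ℚ) / x ≤ 1 / k := by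
  have h0 : (0:ℚ) < k := by exact_mod_cast hk
  have h1 : (k:ℚ) ≤ x := by exact_mod_cast hx
  exact one_div_le_one_div_of_le h0 h1

lemma hw_inv_pos {x : ℕ} (hx : 1 ≤ x) : (0:ℚ) < 1 / x := by
  have : (0:ℚ) < x := by exact_mod_cast (by omega : 0 < x)
  positivity

lemma hw_lt_inv {x k : ℕ} (hx : 0 < x) (hk : 0 < k) (h : (1:ℚ)/x < 1/k) : k + 1 ≤ x := by
  by_contra hc
  push_neg at hc
  have := hw_inv_le hx (by omega : x ≤ k)
  linarith

/-- Sorted three-term case: if `2 ≤ a ≤ b ≤ c` and `1/a+1/b+1/c < 1` then the sum is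
at most `41/42`. -/
lemma hw_three_sorted {a b c : ℕ} (ha : 2 ≤ a) (hab : a ≤ b) (hbc : b ≤ c)
    (h : (1:ℚ)/a + 1/b + 1/c < 1) : (1:ℚ)/a + 1/b + 1/c ≤ 41/42 := by
  have hb : 2 ≤ b := le_trans ha hab
  have hc : 2 ≤ c := le_trans hb hbc
  have hc0 : 0 < c := by omega
  rcases (by omega : a = 2 ∨ 3 ≤ a) with rfl | ha3
  · rcases (by omega : b = 2 ∨ b = 3 ∨ b = 4 ∨ 5 ≤ b) with rfl | rfl | rfl | hb5
    · have h1 := hw_inv_pos (x := c) (by omega)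
      push_cast at h
      linarith
    · have h6 : (1:ℚ)/c < 1/(6:ℕ) := by push_cast at h ⊢; linarith
      have h7 := hw_inv_le (by norm_num : 0 < 7) (hw_lt_inv hc0 (by norm_num) h6)
      push_cast at h7 ⊢
      linarith
    · have h4 : (1:ℚ)/c < 1/(4:ℕ) := by push_cast at h ⊢; linarith
      have h5 := hw_inv_le (by norm_num : 0 < 5) (hw_lt_inv hc0 (by norm_num) h4)
      push_cast at h5 ⊢
      linarith
    · have h1 := hw_inv_le (by norm_num : 0 < 5) hb5
      have h2 := hw_inv_le (by norm_num : 0 < 5) (le_trans hb5 hbc)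
      push_cast at h1 h2 ⊢
      linarith
  · rcases (by omega : a = 3 ∨ 4 ≤ a) with rfl | ha4
    · rcases (by omega : b = 3 ∨ 4 ≤ b) with rfl | hb4
      · have h3 : (1:ℚ)/c < 1/(3:ℕ) := by push_cast at h ⊢; linarith
        have h4 := hw_inv_le (by norm_num : 0 < 4) (hw_lt_inv hc0 (by norm_num) h3)
        push_cast at h4 ⊢
        linarith
      · have h1 := hw_inv_le (by norm_num : 0 < 4) hb4
        have h2 := hw_inv_le (by norm_num : 0 < 4) (le_trans hb4 hbc)
        push_cast at h1 h2 ⊢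
        linarith
    · have h1 := hw_inv_le (by norm_num : 0 < 4) ha4
      have h2 := hw_inv_le (by norm_num : 0 < 4) (le_trans ha4 hab)
      have h3 := hw_inv_le (by norm_num : 0 < 4) (le_trans ha4 (le_trans hab hbc))
      push_cast at h1 h2 h3 ⊢
      linarith

/-- Unordered three-term case. -/
lemma hw_three {a b c : ℕ} (ha : 2 ≤ a) (hb : 2 ≤ b) (hc : 2 ≤ c)
    (h : (1:ℚ)/a + 1/b + 1/c < 1) : (1:ℚ)/a + 1/b + 1/c ≤ 41/42 := by
  rcases le_total a b with hab | hba <;> rcases le_total b c with hbc | hcb <;>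
    rcases le_total a c with hac | hca
  · exact hw_three_sorted ha hab hbc h
  · exact hw_three_sorted ha hab hbc h
  · have := hw_three_sorted ha hac hcb (by linarith)
    linarith
  · have := hw_three_sorted hc hca hab (by linarith)
    linarith
  · have := hw_three_sorted hb hba hac (by linarith)
    linarith
  · have := hw_three_sorted hb hbc hca (by linarith)
    linarith
  · have := hw_three_sorted hc hcb hba (by linarith)
    linarith
  · have := hw_three_sorted hc hcb hba (by linarith)
    linarith

/-- Four-term case. -/
lemma hw_four {a b c d : ℕ} (ha : 2 ≤ a) (hb : 2 ≤ b) (hc : 2 ≤ c) (hd : 2 ≤ d)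
    (h : (1:ℚ)/a + 1/b + 1/c + 1/d < 2) :
    (1:ℚ)/a + 1/b + 1/c + 1/d ≤ 11/6 := by
  have ba := hw_inv_le (by norm_num : 0 < 2) ha
  have bb := hw_inv_le (by norm_num : 0 < 2) hb
  have bc := hw_inv_le (by norm_num : 0 < 2) hc
  have bd := hw_inv_le (by norm_num : 0 < 2) hd
  push_cast at ba bb bc bd
  have key : 3 ≤ a ∨ 3 ≤ b ∨ 3 ≤ c ∨ 3 ≤ d := by
    by_contra hcon
    push_neg at hcon
    obtain ⟨h1, h2, h3, h4⟩ := hcon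
    obtain rfl : a = 2 := by omega
    obtain rfl : b = 2 := by omega
    obtain rfl : c = 2 := by omega
    obtain rfl : d = 2 := by omega
    push_cast at h
    linarith
  rcases key with h3 | h3 | h3 | h3 <;>
    · have h13 := hw_inv_le (by norm_num : 0 < 3) h3
      push_cast at h13
      linarith

/-- Key lemma: if the orbifold Euler characteristic quantity is positive, it is at
least `1/84`. -/
lemma hw_key (h : ℕ) (m : List ℕ) (hm : ∀ x ∈ m, 2 ≤ x)
    (hpos : 0 < (h:ℚ) - 1 + (1/2) * (m.map (fun x : ℕ => 1 - 1/(x:ℚ))).sum) :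
    1/84 ≤ (h:ℚ) - 1 + (1/2) * (m.map (fun x : ℕ => 1 - 1/(x:ℚ))).sum := by
  set S := (m.map (fun x : ℕ => 1 - 1/(x:ℚ))).sum with hSdef
  have hSlow : (m.length : ℚ) * (1/2) ≤ S := by
    have := List.card_nsmul_le_sum (m.map (fun x : ℕ => 1 - 1/(x:ℚ))) (1/2) (by
      intro x hx
      simp only [List.mem_map] at hx
      obtain ⟨y, hy, rfl⟩ := hx
      have h1 := hw_inv_le (by norm_num : 0 < 2) (hm y hy)
      push_cast at h1
      linarith)
    simpa only [nsmul_eq_mul, List.length_map] using this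
  have hShigh : S ≤ (m.length : ℚ) := by
    have := List.sum_le_card_nsmul (m.map (fun x : ℕ => 1 - 1/(x:ℚ))) 1 (by
      intro x hx
      simp only [List.mem_map] at hx
      obtain ⟨y, hy, rfl⟩ := hx
      have h1 := hw_inv_pos (x := y) (by have := hm y hy; omega)
      linarith)
    simpa only [nsmul_eq_mul, List.length_map, mul_one] using this
  rcases (by omega : h = 0 ∨ h = 1 ∨ 2 ≤ h) with rfl | rfl | h2
  · -- h = 0
    simp only [Nat.cast_zero] at hpos ⊢
    have hS2 : (2:ℚ) < S := by linarith
    have hr3 : 3 ≤ m.length := by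
      by_contra hcon
      push_neg at hcon
      have : (m.length : ℚ) ≤ 2 := by exact_mod_cast (by omega : m.length ≤ 2)
      linarith
    rcases (by omega : m.length = 3 ∨ m.length = 4 ∨ 5 ≤ m.length) with h3 | h4 | h5
    · obtain ⟨a, b, c, rfl⟩ := List.length_eq_three.mp h3
      have hsum : S = 3 - ((1:ℚ)/a + 1/b + 1/c) := by
        simp only [hSdef, List.map_cons, List.map_nil, List.sum_cons, List.sum_nil]
        ring
      have ha := hm a (by simp)
      have hb := hm b (by simp)
      have hc := hm c (by simp)
      have hlt : (1:ℚ)/a + 1/b + 1/c < 1 := by rw [hsum] at hS2; linarith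
      have := hw_three ha hb hc hlt
      rw [hsum]
      linarith
    · obtain ⟨a, l, rfl⟩ : ∃ a l, m = a :: l := by
        cases m with
        | nil => simp at h4
        | cons a l => exact ⟨a, l, rfl⟩
      obtain ⟨b, c, d, rfl⟩ : ∃ b c d, l = [b, c, d] :=
        List.length_eq_three.mp (by simpa using h4)
      have hsum : S = 4 - ((1:ℚ)/a + 1/b + 1/c + 1/d) := by
        simp only [hSdef, List.map_cons, List.map_nil, List.sum_cons, List.sum_nil]
        ring
      have ha := hm a (by simp)
      have hb := hm b (by simp)
      have hc := hm c (by simp)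
      have hd := hm d (by simp)
      have hlt : (1:ℚ)/a + 1/b + 1/c + 1/d < 2 := by rw [hsum] at hS2; linarith
      have := hw_four ha hb hc hd hlt
      rw [hsum]
      linarith
    · have : (5:ℚ) ≤ m.length := by exact_mod_cast h5
      linarith
  · -- h = 1
    simp only [Nat.cast_one] at hpos ⊢
    have hne : m ≠ [] := by
      rintro rfl
      simp [hSdef] at hpos
    have hr1 : 1 ≤ m.length := by
      cases m with
      | nil => exact absurd rfl hne
      | cons a l => simp
    have : (1:ℚ) ≤ m.length := by exact_mod_cast hr1
    linarith
  · have h2' : (2:ℚ) ≤ h := by exact_mod_cast h2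
    have : (0:ℚ) ≤ m.length := by positivity
    linarith

/-- The sum appearing in `RHFormula` (which elaborates via a coercion `List ℕ → List ℚ`)
agrees with the sum over the natural-number list. -/
lemma hw_sum_eq (m : List ℕ) (f : ℚ → ℚ) :
    (List.map f (do
      let a ← m
      pure ((a:ℚ)))).sum = (m.map (fun x : ℕ => f x)).sum := by
  induction m with
  | nil => simp
  | cons a l ih => simp_all

/-- Hurwitz bound: if `N` witnesses that `(h; m₁, …, m_r)` is a potential signature for
genus `σ ≥ 2`, then `N ≤ 84 (σ - 1)`. -/
theorem hurwitz_bound (σ h N : ℕ) (m : List ℕ) (hσ : 2 ≤ σ)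
    (hm : ∀ x ∈ m, 2 ≤ x) (hN : 0 < N) (hdvd : ∀ x ∈ m, x ∣ N)
    (hRH : RHFormula σ N h m) :
    N ≤ 84 * (σ - 1) := by
  unfold RHFormula at hRH
  rw [hw_sum_eq m (fun x => 1 - 1/x)] at hRH
  have hNQ : (0:ℚ) < N := by exact_mod_cast hN
  have hσ1 : (1:ℚ) ≤ (σ:ℚ) - 1 := by
    have : (2:ℚ) ≤ σ := by exact_mod_cast hσ
    linarith
  set Q := (h : ℚ) - 1 + (1/2) * (m.map (fun x : ℕ => 1 - 1/(x:ℚ))).sum with hQdef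
  have hRH' : (σ:ℚ) - 1 = (N:ℚ) * Q := hRH
  have hQpos : 0 < Q := by
    by_contra hcon
    push_neg at hcon
    have : (N:ℚ) * Q ≤ 0 := mul_nonpos_of_nonneg_of_nonpos (le_of_lt hNQ) hcon
    linarith
  have hkey : 1/84 ≤ Q := hw_key h m hm hQpos
  have hfin : (N:ℚ) ≤ 84 * ((σ:ℚ) - 1) := by
    have h1 : (N:ℚ) * (1/84) ≤ (N:ℚ) * Q :=
      mul_le_mul_of_nonneg_left hkey (le_of_lt hNQ)
    rw [← hRH'] at h1
    linarith
  have hcast : ((84 * (σ - 1) : ℕ) : ℚ) = 84 * ((σ:ℚ) - 1) := by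
    push_cast [Nat.cast_sub (by omega : 1 ≤ σ)]
    ring
  exact_mod_cast hcast ▸ hfin
end

section
/- Let σ ≥ 2 and σ' ≥ 2 be integers. If the tuple (0; 2, 2σ+1, 4σ+2) is a potential signature for genus σ', then (σ − 1) divides (σ' − 1). -/
theorem rhFormula_kulkarni_iff (σ σ' N : ℕ) :
    RHFormula σ' N 0 [2, 2 * σ + 1, 4 * σ + 2] ↔
      (σ' : ℚ) - 1 = N * (σ - 1) / (4 * σ + 2) := by
  have h₁ : (2 * σ + 1 : ℚ) ≠ 0 := by positivity
  have h₂ : (4 * σ + 2 : ℚ) ≠ 0 := by positivity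
  have hsum : (0 - 1 + 1 / 2 * ((1 - 1 / 2) + (1 - 1 / (2 * σ + 1)) + (1 - 1 / (4 * σ + 2))) : ℚ)
      = (σ - 1) / (4 * σ + 2) := by
    field_simp
    ring
  simp only [RHFormula, List.bind_eq_flatMap, List.flatMap_cons, List.flatMap_nil, List.pure_def,
    List.singleton_append, List.map_cons, List.map_nil, List.sum_cons, List.sum_nil, add_zero,
    ← add_assoc]
  push_cast
  rw [hsum, mul_div_assoc]

-- For `a = 0` the hypothesis forces `b ≤ 1`, so both truncated differences vanish.
theorem Nat.sub_one_dvd_sub_one_of_intCast_eq {a b k : ℕ}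
    (h : (b : ℤ) - 1 = ((a : ℤ) - 1) * k) : a - 1 ∣ b - 1 := by
  rcases a with _ | a
  · have : b - 1 = 0 := by push_cast at h; omega
    simp [this]
  · refine ⟨k, ?_⟩
    push_cast at h
    lia

theorem kulkarni_potential_dvd_general (σ σ' : ℕ)
    (hpot : IsPotentialSignature σ' 0 [2, 2 * σ + 1, 4 * σ + 2]) :
    (σ - 1) ∣ (σ' - 1) := by
  obtain ⟨-, N, -, hdvd, hRH⟩ := hpot
  obtain ⟨k, rfl⟩ := hdvd (4 * σ + 2) (by simp)
  rw [rhFormula_kulkarni_iff] at hRH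
  have hk : (σ' : ℚ) - 1 = ((σ : ℚ) - 1) * k := by
    rw [hRH]
    push_cast
    field_simp
  exact Nat.sub_one_dvd_sub_one_of_intCast_eq (by exact_mod_cast hk)

/-- If `(0; 2, 2σ + 1, 4σ + 2)` is a potential signature for genus `σ'`, then
`(σ - 1) ∣ (σ' - 1)`. -/
theorem kulkarni_potential_dvd (σ σ' : ℕ) (hσ : 2 ≤ σ) (hσ' : 2 ≤ σ')
    (hpot : IsPotentialSignature σ' 0 [2, 2 * σ + 1, 4 * σ + 2]) :
    (σ - 1) ∣ (σ' - 1) :=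
  kulkarni_potential_dvd_general σ σ' hpot
end

section
/- For every integer σ ≥ 2, the cyclic group of order 4σ + 2 admits a (0; 2, 2σ+1, 4σ+2)-generating vector; consequently (0; 2, 2σ+1, 4σ+2) is an actual signature for genus σ. -/
open scoped commutatorElement
/-- `(a, b, c)` is an `(h; m₁, …, m_r)`-generating vector for the group `G`:
the elements generate `G`, the order of `cᵢ` is `mᵢ`, and
`∏ ⁅aᵢ, bᵢ⁆ · ∏ cⱼ = 1`. -/
def IsGenVector (G : Type*) [Group G] (h : ℕ) (m : List ℕ)
    (a b : Fin h → G) (c : Fin m.length → G) : Prop :=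
  Subgroup.closure (Set.range a ∪ Set.range b ∪ Set.range c) = ⊤ ∧
  (∀ i : Fin m.length, orderOf (c i) = m.get i) ∧
  (List.ofFn fun i => ⁅a i, b i⁆).prod * (List.ofFn c).prod = 1

/-- `G` admits an `(h; m₁, …, m_r)`-generating vector. -/
def HasGenVector (G : Type*) [Group G] (h : ℕ) (m : List ℕ) : Prop :=
  ∃ (a b : Fin h → G) (c : Fin m.length → G), IsGenVector G h m a b c

/-- `(h; m₁, …, m_r)` (with all `mᵢ ≥ 2`) is an actual signature for genus `σ`: some finite
group `G` admits an `(h; m₁, …, m_r)`-generating vector and `N = |G|` satisfies the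
Riemann–Hurwitz formula for genus `σ`. -/
def IsActualSignature (σ h : ℕ) (m : List ℕ) : Prop :=
  (∀ x ∈ m, 2 ≤ x) ∧
  ∃ (G : Type) (_ : Group G) (_ : Fintype G),
    HasGenVector G h m ∧ RHFormula σ (Fintype.card G) h m

/-! A generator `g` of the cyclic group of order `4σ + 2 = 2(2σ + 1)` yields the vector
`(g^(2σ+1), g^(2σ), g)`: the first entry is the involution, `g^(2σ) = (g²)^σ` has order `2σ + 1`
because `σ` is prime to `2σ + 1`, and the product is `g^(4σ+2) = 1`. For `|G| = 4σ + 2` the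
Riemann–Hurwitz formula with signature `(0; 2, 2σ+1, 4σ+2)` gives exactly genus `σ`. -/

section GenVector

variable {G : Type*} [Group G]

theorem hasGenVector_triangle {x y z : G} {m₁ m₂ m₃ : ℕ}
    (hgen : Subgroup.closure {x, y, z} = ⊤)
    (hx : orderOf x = m₁) (hy : orderOf y = m₂) (hz : orderOf z = m₃) (hprod : x * y * z = 1) :
    HasGenVector G 0 [m₁, m₂, m₃] := by
  refine ⟨![], ![], ![x, y, z], ?_, ?_, ?_⟩
  · have hrange : Set.range ![x, y, z] = {x, y, z} := by
      simp only [Matrix.range_cons, Set.range_eq_empty, Set.union_empty, Set.singleton_union]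
    rwa [Set.range_eq_empty, Set.empty_union, Set.empty_union, hrange]
  · intro i
    fin_cases i <;> assumption
  · simpa [List.ofFn_succ, mul_assoc] using hprod

theorem orderOf_pow_two_mul_of_orderOf_eq {g : G} {k : ℕ} (hg : orderOf g = 2 * (2 * k + 1)) :
    orderOf (g ^ (2 * k)) = 2 * k + 1 := by
  have hsq : orderOf (g ^ 2) = 2 * k + 1 := by
    simpa [hg] using orderOf_pow_orderOf_div (x := g) (n := 2 * k + 1) (by omega) (by simp [hg])
  have hcop : (orderOf (g ^ 2)).Coprime k := by
    rw [hsq]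
    simp
  rw [pow_mul, hcop.orderOf_pow, hsq]

theorem hasGenVector_of_zpowers_eq_top {g : G} {k : ℕ} (hgen : Subgroup.zpowers g = ⊤)
    (hg : orderOf g = 4 * k + 2) : HasGenVector G 0 [2, 2 * k + 1, 4 * k + 2] := by
  have hg' : orderOf g = 2 * (2 * k + 1) := by rw [hg]; ring
  refine hasGenVector_triangle (x := g ^ (2 * k + 1)) (y := g ^ (2 * k)) (z := g) ?_ ?_
    (orderOf_pow_two_mul_of_orderOf_eq hg') hg ?_
  · rw [eq_top_iff, ← hgen, Subgroup.zpowers_eq_closure]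
    exact Subgroup.closure_mono (by simp)
  · simpa [hg'] using orderOf_pow_orderOf_div (x := g) (n := 2) (by omega) (by simp [hg'])
  · rw [mul_assoc, ← pow_succ, ← pow_add, show 2 * k + 1 + (2 * k + 1) = orderOf g by omega,
      pow_orderOf_eq_one]

theorem IsCyclic.hasGenVector [Fintype G] [IsCyclic G] {k : ℕ}
    (hcard : Fintype.card G = 4 * k + 2) : HasGenVector G 0 [2, 2 * k + 1, 4 * k + 2] := by
  obtain ⟨g, hg⟩ := IsCyclic.exists_generator (α := G)
  refine hasGenVector_of_zpowers_eq_top (g := g) (eq_top_iff.2 fun x _ => hg x) ?_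
  rw [orderOf_eq_card_of_forall_mem_zpowers hg, Nat.card_eq_fintype_card, hcard]

end GenVector

theorem rhFormula_four_mul_add_two (σ : ℕ) :
    RHFormula σ (4 * σ + 2) 0 [2, 2 * σ + 1, 4 * σ + 2] := by
  norm_num [RHFormula]
  field_simp
  ring

/-- For every `σ ≥ 2`, the cyclic group of order `4σ + 2` admits a
`(0; 2, 2σ+1, 4σ+2)`-generating vector; consequently `(0; 2, 2σ+1, 4σ+2)` is an actual
signature for genus `σ`. -/
theorem cyclic_genVector_kulkarni (σ : ℕ) (hσ : 2 ≤ σ) :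
    (∀ (G : Type) [Group G] [Fintype G], IsCyclic G → Fintype.card G = 4 * σ + 2 →
      HasGenVector G 0 [2, 2 * σ + 1, 4 * σ + 2]) ∧
    IsActualSignature σ 0 [2, 2 * σ + 1, 4 * σ + 2] := by
  have hcard : Fintype.card (Multiplicative (ZMod (4 * σ + 2))) = 4 * σ + 2 := by simp
  refine ⟨fun _ _ _ _ => IsCyclic.hasGenVector, ?_, _, inferInstance, inferInstance,
    IsCyclic.hasGenVector hcard, ?_⟩
  · simp only [List.mem_cons, List.not_mem_nil, or_false]
    omega
  · rw [hcard]
    exact rhFormula_four_mul_add_two σ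
end

section
/- For every integer σ ≥ 2, the dihedral group D_{σ−1} = ⟨x, y | x^{σ−1}, y², yxyx⟩ of order 2(σ − 1) admits a (1; 2, 2)-generating vector, namely (x, e, y, y); consequently (1; 2, 2) is an actual signature for every genus σ ≥ 2. -/
open scoped commutatorElement
namespace DihedralGroup

theorem closure_r_one_sr_zero (n : ℕ) :
    Subgroup.closure ({r 1, sr 0} : Set (DihedralGroup n)) = ⊤ := by
  set H := Subgroup.closure ({r 1, sr 0} : Set (DihedralGroup n))
  have hr : ∀ k : ZMod n, r k ∈ H := fun k => by
    rw [← ZMod.intCast_zmod_cast k, ← r_one_zpow]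
    exact zpow_mem (Subgroup.subset_closure (by simp)) _
  rw [eq_top_iff]
  rintro (k | k) -
  · exact hr k
  · rw [← zero_add k, ← sr_mul_r]
    exact mul_mem (Subgroup.subset_closure (by simp)) (hr k)

theorem isGenVector_one_two_two (n : ℕ) :
    IsGenVector (DihedralGroup n) 1 [2, 2] ![r 1] ![1] ![sr 0, sr 0] := by
  refine ⟨?_, ?_, ?_⟩
  · refine eq_top_iff.2 ((closure_r_one_sr_zero n).symm.le.trans (Subgroup.closure_mono ?_))
    rintro x (rfl | rfl)
    · exact Or.inl (Or.inl ⟨0, rfl⟩)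
    · exact Or.inr ⟨0, rfl⟩
  · intro i
    fin_cases i <;> exact orderOf_sr 0
  · simp [List.ofFn_succ, sr_mul_sr]

end DihedralGroup

theorem rhFormula_one_two_two (σ : ℕ) (hσ : 1 ≤ σ) :
    RHFormula σ (2 * (σ - 1)) 1 [2, 2] := by
  rw [RHFormula, Nat.cast_mul, Nat.cast_sub hσ]
  norm_num
  ring

/-- For every `σ ≥ 2`, the dihedral group of order `2(σ - 1)` admits a
`(1; 2, 2)`-generating vector, namely `(x, e, y, y)`; consequently `(1; 2, 2)` is an
actual signature for every genus `σ ≥ 2`. -/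
theorem dihedral_genVector_one_two_two (σ : ℕ) (hσ : 2 ≤ σ) :
    Nat.card (DihedralGroup (σ - 1)) = 2 * (σ - 1) ∧
    IsGenVector (DihedralGroup (σ - 1)) 1 [2, 2]
      ![DihedralGroup.r 1] ![1] ![DihedralGroup.sr 0, DihedralGroup.sr 0] ∧
    IsActualSignature σ 1 [2, 2] := by
  have : NeZero (σ - 1) := ⟨by omega⟩
  have hgen := DihedralGroup.isGenVector_one_two_two (σ - 1)
  refine ⟨DihedralGroup.nat_card, hgen, by norm_num, DihedralGroup (σ - 1), inferInstance,
    inferInstance, ⟨_, _, _, hgen⟩, ?_⟩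
  rw [DihedralGroup.card]
  exact rhFormula_one_two_two σ (by omega)
end

section
/- For every integer σ ≥ 2, the dihedral group D_{2(σ−1)} = ⟨x, y | x^{2(σ−1)}, y², yxyx⟩ of order 4(σ − 1) admits a (0; 2, 2, 2, 2, 2)-generating vector, namely (xy, xy, y, yx^{σ−1}, x^{σ−1}); consequently (0; 2, 2, 2, 2, 2) is an actual signature for every genus σ ≥ 2. -/
open scoped commutatorElement
/-! With `x = r 1`, `y = sr 0` and `k = σ - 1`, the vector is `(xy, xy, y, y xᵏ, xᵏ)`: the first
four entries are reflections and `xᵏ` is the half-turn, so each has order 2, and the product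
regroups as `(xy)² · y² · (xᵏ)² = 1`. The reflections `xy` and `y` already generate the group, and
Riemann–Hurwitz reads `4k · (-1 + 5/4) = k`. -/

namespace DihedralGroup

variable {n : ℕ}

theorem eq_top_of_r_one_mul_sr_zero_mem {H : Subgroup (DihedralGroup n)}
    (hrs : r 1 * sr 0 ∈ H) (hs : sr 0 ∈ H) : H = ⊤ := by
  have hr : r 1 ∈ H := by
    simpa only [mul_assoc, sr_mul_self, mul_one] using H.mul_mem hrs hs
  have hr_mem (i : ZMod n) : r i ∈ H := by
    rw [← ZMod.intCast_zmod_cast i, ← r_one_zpow]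
    exact H.zpow_mem hr _
  rw [eq_top_iff]
  rintro (i | i) -
  · exact hr_mem i
  · simpa only [sr_mul_r, zero_add] using H.mul_mem hs (hr_mem i)

theorem orderOf_r_mul_sr (i j : ZMod n) : orderOf (r i * sr j) = 2 := by
  rw [r_mul_sr]
  exact orderOf_sr _

theorem orderOf_sr_mul_r (i j : ZMod n) : orderOf (sr i * r j) = 2 := by
  rw [sr_mul_r]
  exact orderOf_sr _

theorem r_one_pow_half_sq (k : ℕ) : ((r 1 : DihedralGroup (2 * k)) ^ k) ^ 2 = 1 := by
  rw [← pow_mul, mul_comm, r_one_pow_n]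

theorem orderOf_r_one_pow_half {k : ℕ} (hk : k ≠ 0) :
    orderOf ((r 1 : DihedralGroup (2 * k)) ^ k) = 2 := by
  have hk_ne : (k : ZMod (2 * k)) ≠ 0 := by
    rw [Ne, ZMod.natCast_eq_zero_iff]
    exact fun h => absurd (Nat.le_of_dvd (Nat.pos_of_ne_zero hk) h) (by omega)
  refine orderOf_eq_prime (r_one_pow_half_sq k) fun h => hk_ne (r.inj ?_)
  rw [← r_one_pow, h, one_def]

end DihedralGroup

open DihedralGroup

theorem isGenVector_dihedral_five_twos (k : ℕ) (hk : k ≠ 0) :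
    IsGenVector (DihedralGroup (2 * k)) 0 [2, 2, 2, 2, 2] ![] ![]
      ![r 1 * sr 0, r 1 * sr 0, sr 0, sr 0 * r 1 ^ k, r 1 ^ k] := by
  refine ⟨?_, ?_, ?_⟩
  · exact eq_top_of_r_one_mul_sr_zero_mem
      (Subgroup.subset_closure (Set.mem_union_right _ ⟨0, rfl⟩))
      (Subgroup.subset_closure (Set.mem_union_right _ ⟨2, rfl⟩))
  · intro i
    fin_cases i
    · exact orderOf_r_mul_sr _ _
    · exact orderOf_r_mul_sr _ _
    · exact orderOf_sr _
    · show orderOf (sr 0 * r 1 ^ k) = 2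
      rw [r_one_pow]
      exact orderOf_sr_mul_r _ _
    · exact orderOf_r_one_pow_half hk
  · simp only [List.ofFn_zero, List.prod_nil, one_mul, List.ofFn_succ, List.prod_cons,
      Matrix.cons_val_zero, Matrix.cons_val_succ, mul_one]
    calc r 1 * sr 0 * (r 1 * sr 0 * (sr 0 * (sr 0 * r 1 ^ k * r 1 ^ k)))
        = (r 1 * sr 0) * (r 1 * sr 0) * (sr 0 * sr 0) * (r 1 ^ k) ^ 2 := by group
      _ = 1 := by rw [r_mul_sr, sr_mul_self, sr_mul_self, r_one_pow_half_sq, one_mul, one_mul]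

theorem IsGenVector.isActualSignature {G : Type} [Group G] [Fintype G] {σ h : ℕ} {m : List ℕ}
    {a b : Fin h → G} {c : Fin m.length → G} (hv : IsGenVector G h m a b c)
    (hm : ∀ x ∈ m, 2 ≤ x) (hRH : RHFormula σ (Nat.card G) h m) : IsActualSignature σ h m :=
  ⟨hm, G, inferInstance, inferInstance, ⟨a, b, c, hv⟩, Nat.card_eq_fintype_card (α := G) ▸ hRH⟩

theorem rhFormula_zero_five_twos {σ : ℕ} (hσ : 1 ≤ σ) :
    RHFormula σ (4 * (σ - 1)) 0 [2, 2, 2, 2, 2] := by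
  simp only [RHFormula, Nat.cast_mul, Nat.cast_sub hσ]
  norm_num
  ring

/-- For every `σ ≥ 2`, the dihedral group of order `4(σ - 1)` admits a
`(0; 2, 2, 2, 2, 2)`-generating vector, namely `(xy, xy, y, y x^(σ-1), x^(σ-1))`;
consequently `(0; 2, 2, 2, 2, 2)` is an actual signature for every genus `σ ≥ 2`. -/
theorem dihedral_genVector_five_twos (σ : ℕ) (hσ : 2 ≤ σ) :
    Nat.card (DihedralGroup (2 * (σ - 1))) = 4 * (σ - 1) ∧
    IsGenVector (DihedralGroup (2 * (σ - 1))) 0 [2, 2, 2, 2, 2] ![] ![]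
      ![DihedralGroup.r 1 * DihedralGroup.sr 0,
        DihedralGroup.r 1 * DihedralGroup.sr 0,
        DihedralGroup.sr 0,
        DihedralGroup.sr 0 * (DihedralGroup.r 1) ^ (σ - 1),
        (DihedralGroup.r 1) ^ (σ - 1)] ∧
    IsActualSignature σ 0 [2, 2, 2, 2, 2] := by
  have : NeZero (2 * (σ - 1)) := ⟨by omega⟩
  have hcard : Nat.card (DihedralGroup (2 * (σ - 1))) = 4 * (σ - 1) := by
    rw [DihedralGroup.nat_card, ← mul_assoc]
    rfl
  have hv := isGenVector_dihedral_five_twos (σ - 1) (by omega)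
  refine ⟨hcard, hv, hv.isActualSignature (by simp) ?_⟩
  rw [hcard]
  exact rhFormula_zero_five_twos (by omega)
end

section
/- There exists a finite group G of order 168 admitting a (0; 2, 3, 7)-generating vector; consequently (0; 2, 3, 7) is an actual signature for genus 3. -/
open scoped commutatorElement
open Matrix

namespace Matrix.GeneralLinearGroup

variable {n : Type*} [Fintype n] [DecidableEq n]

theorem eq_top_of_diagonal_mem_of_transvection_mem {𝕜 : Type*} [Field 𝕜] (H : Subgroup (GL n 𝕜))
    (hdiag : ∀ (g : GL n 𝕜) (d : n → 𝕜), (g : Matrix n n 𝕜) = diagonal d → g ∈ H)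
    (htransv : ∀ (g : GL n 𝕜) (t : TransvectionStruct n 𝕜), (g : Matrix n n 𝕜) = t.toMatrix →
      g ∈ H) :
    H = ⊤ := by
  refine eq_top_iff.2 fun g _ ↦ diagonal_transvection_induction_of_det_ne_zero
    (fun M ↦ ∀ g : GL n 𝕜, (g : Matrix n n 𝕜) = M → g ∈ H) g (det_ne_zero g)
    (fun d _ ↦ (hdiag · d)) (fun t ↦ (htransv · t)) ?_ g rfl
  intro A B hA _ hPA hPB g hg
  set u := mkOfDetNeZero A hA
  have hu : u⁻¹ * g ∈ H := hPB _ <| by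
    rw [coe_mul, hg, ← Matrix.mul_assoc, show (↑u⁻¹ : Matrix n n 𝕜) * A = 1 from u.inv_mul,
      Matrix.one_mul]
  simpa using mul_mem (hPA u rfl) hu

theorem eq_top_of_transvection_one_mem (H : Subgroup (GL n (ZMod 2)))
    (h : ∀ (g : GL n (ZMod 2)) (i j : n), i ≠ j →
      (g : Matrix n n (ZMod 2)) = transvection i j 1 → g ∈ H) :
    H = ⊤ := by
  refine eq_top_of_diagonal_mem_of_transvection_mem H (fun g d hg ↦ ?_) (fun g t hg ↦ ?_)
  · have hd : d = 1 := funext fun i ↦ by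
      have hdet : ∏ i, d i ≠ 0 := by simpa [← det_diagonal, ← hg] using det_ne_zero g
      exact (by decide : ∀ x : ZMod 2, x ≠ 0 → x = 1) _
        (Finset.prod_ne_zero_iff.1 hdet i (Finset.mem_univ i))
    obtain rfl : g = 1 := Units.ext (by rw [hg, hd, Pi.one_def, diagonal_one, coe_one])
    exact one_mem H
  · obtain ⟨i, j, hij, c⟩ := t
    obtain rfl | rfl : c = 0 ∨ c = 1 := (by decide : ∀ x : ZMod 2, x = 0 ∨ x = 1) c
    · obtain rfl : g = 1 :=
        Units.ext (by rw [hg, TransvectionStruct.toMatrix_mk, transvection_zero, coe_one])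
      exact one_mem H
    · exact h g i j hij hg

end Matrix.GeneralLinearGroup

theorem card_GL_three_zmod_two : Fintype.card (GL (Fin 3) (ZMod 2)) = 168 := by
  rw [← Nat.card_eq_fintype_card, card_GL_field]
  simp [Fin.prod_univ_three, ZMod.card]

theorem hasGenVector_zero_of_mul_mul_eq_one {G : Type*} [Group G] {x y z : G}
    (hgen : Subgroup.closure {x, y, z} = ⊤) (hxyz : x * y * z = 1) :
    HasGenVector G 0 [orderOf x, orderOf y, orderOf z] := by
  refine ⟨Fin.elim0, Fin.elim0, ![x, y, z], ?_, fun i ↦ by fin_cases i <;> rfl, ?_⟩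
  · convert hgen using 2
    ext w
    simp only [Set.mem_union, Set.mem_range, Set.mem_insert_iff, Set.mem_singleton_iff]
    simp [Fin.exists_fin_succ, eq_comm]
  · simpa [List.ofFn_succ, mul_assoc] using hxyz

namespace HurwitzTriple

-- The second components are the inverses: `a⁻¹ = a`, `b⁻¹ = b²`, `c⁻¹ = ab`.
def a : GL (Fin 3) (ZMod 2) :=
  ⟨!![0,0,1; 0,1,0; 1,0,0], !![0,0,1; 0,1,0; 1,0,0], by decide, by decide⟩
def b : GL (Fin 3) (ZMod 2) :=
  ⟨!![0,1,0; 1,0,1; 1,1,0], !![1,0,1; 1,0,0; 1,1,1], by decide, by decide⟩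
def c : GL (Fin 3) (ZMod 2) :=
  ⟨!![1,0,1; 0,0,1; 1,1,1], !![1,1,0; 1,0,1; 0,1,0], by decide, by decide⟩

theorem a_mul_b_mul_c : a * b * c = 1 := by decide

theorem orderOf_a : orderOf a = 2 := orderOf_eq_prime (by decide) (by decide)

theorem orderOf_b : orderOf b = 3 := orderOf_eq_prime (by decide) (by decide)

theorem orderOf_c : orderOf c = 7 :=
  haveI : Fact (Nat.Prime 7) := ⟨by norm_num⟩
  orderOf_eq_prime (by decide) (by decide)

theorem closure_eq_top : Subgroup.closure {a, b, c} = ⊤ := by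
  refine GeneralLinearGroup.eq_top_of_transvection_one_mem _ fun g i j hij hg ↦ ?_
  -- Words for `1 + E₀₁, 1 + E₀₂, 1 + E₁₀, 1 + E₁₂, 1 + E₂₀, 1 + E₂₁`, found by breadth-first search.
  have hwords : ∀ i j : Fin 3, i ≠ j → transvection i j (1 : ZMod 2) ∈
      [a*b*a*c, a*c*c*b*a*c*c, c*b, a*c*b*a, c*c*b*a*c*b*b, b*a*b*b].map (↑) := by
    decide
  obtain ⟨w, hw, hwg⟩ := List.mem_map.1 (hwords i j hij)
  obtain rfl : g = w := Units.ext (hg.trans hwg.symm)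
  have ha : a ∈ Subgroup.closure {a, b, c} := Subgroup.subset_closure (by simp)
  have hb : b ∈ Subgroup.closure {a, b, c} := Subgroup.subset_closure (by simp)
  have hc : c ∈ Subgroup.closure {a, b, c} := Subgroup.subset_closure (by simp)
  simp only [List.mem_cons, List.not_mem_nil, or_false] at hw
  rcases hw with rfl | rfl | rfl | rfl | rfl | rfl <;> apply_rules [mul_mem]

theorem hasGenVector : HasGenVector (GL (Fin 3) (ZMod 2)) 0 [2, 3, 7] := by
  simpa only [orderOf_a, orderOf_b, orderOf_c] using
    hasGenVector_zero_of_mul_mul_eq_one closure_eq_top a_mul_b_mul_c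

end HurwitzTriple

/-- There is a finite group of order 168 admitting a `(0; 2, 3, 7)`-generating vector;
consequently `(0; 2, 3, 7)` is an actual signature for genus 3. -/
theorem hurwitz_genus_three :
    (∃ (G : Type) (_ : Group G) (_ : Fintype G),
      Fintype.card G = 168 ∧ HasGenVector G 0 [2, 3, 7]) ∧
    IsActualSignature 3 0 [2, 3, 7] := by
  have hRH : RHFormula 3 168 0 [2, 3, 7] := by norm_num [RHFormula]
  exact ⟨⟨_, _, _, card_GL_three_zmod_two, HurwitzTriple.hasGenVector⟩,
    by decide, _, _, _, HurwitzTriple.hasGenVector, card_GL_three_zmod_two ▸ hRH⟩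
end

section
/- No finite group of order 6 admits a (0; 3, 3, 3, 3)-generating vector; consequently (0; 3, 3, 3, 3) is not an actual signature for genus 3. -/
open scoped commutatorElement
/-! An element of odd order `2k + 1` equals `(g²)^(k+1)`, and squares lie in every subgroup of
index two, so elements of odd order lie in every such subgroup. Hence a group generated by the
elements of a `(0; 3, 3, 3, 3)`-generating vector has no subgroup of index two, whereas a group of
order `6` has one by Cauchy's theorem. The Riemann–Hurwitz formula for genus `3` and signature
`(0; 3, 3, 3, 3)` forces `|G| = 6`. -/

theorem Subgroup.mem_of_index_eq_two_of_odd_orderOf {G : Type*} [Group G] {H : Subgroup G}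
    (hH : H.index = 2) {g : G} (hg : Odd (orderOf g)) : g ∈ H := by
  obtain ⟨k, hk⟩ := hg
  have hg_eq : g = (g ^ 2) ^ (k + 1) := by
    rw [← pow_mul, show 2 * (k + 1) = orderOf g + 1 by omega, pow_succ, pow_orderOf_eq_one,
      one_mul]
  exact hg_eq ▸ pow_mem (sq_mem_of_index_two hH g) _

theorem exists_index_eq_two_of_card_eq_two_mul_prime {G : Type*} [Group G] [Finite G] {p : ℕ}
    [hp : Fact p.Prime] (hG : Nat.card G = 2 * p) : ∃ H : Subgroup G, H.index = 2 := by
  obtain ⟨x, hx⟩ := exists_prime_orderOf_dvd_card' p (hG ▸ dvd_mul_left p 2)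
  refine ⟨Subgroup.zpowers x, ?_⟩
  have h := (Subgroup.zpowers x).index_mul_card
  rw [Nat.card_zpowers, hx, hG] at h
  exact Nat.eq_of_mul_eq_mul_right hp.out.pos h

theorem HasGenVector.index_ne_two_of_odd {G : Type*} [Group G] {m : List ℕ}
    (hgen : HasGenVector G 0 m) (hm : ∀ x ∈ m, Odd x) (H : Subgroup G) : H.index ≠ 2 := by
  obtain ⟨a, b, c, hclosure, horder, -⟩ := hgen
  intro hH
  have hc : ∀ i, c i ∈ H := fun i =>
    H.mem_of_index_eq_two_of_odd_orderOf hH (horder i ▸ hm _ (List.get_mem m i))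
  have htop : H = ⊤ := by
    rw [eq_top_iff, ← hclosure, Subgroup.closure_le]
    rintro x ((⟨i, -⟩ | ⟨i, -⟩) | ⟨i, rfl⟩)
    exacts [i.elim0, i.elim0, hc i]
  simp [htop] at hH

theorem rhFormula_genus_three_zero_three_three_three_three_iff {N : ℕ} :
    RHFormula 3 N 0 [3, 3, 3, 3] ↔ N = 6 := by
  unfold RHFormula
  constructor
  · intro h
    norm_num at h
    exact_mod_cast (by linarith : (N : ℚ) = 6)
  · rintro rfl
    norm_num

/-- No finite group of order 6 admits a `(0; 3, 3, 3, 3)`-generating vector;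
consequently `(0; 3, 3, 3, 3)` is not an actual signature for genus 3. -/
theorem no_three_three_three_three_genus_three :
    (∀ (G : Type) [Group G] [Fintype G], Fintype.card G = 6 →
      ¬ HasGenVector G 0 [3, 3, 3, 3]) ∧
    ¬ IsActualSignature 3 0 [3, 3, 3, 3] := by
  have order_six : ∀ (G : Type) [Group G] [Fintype G], Fintype.card G = 6 →
      ¬ HasGenVector G 0 [3, 3, 3, 3] := by
    intro G _ _ hcard hgen
    obtain ⟨H, hH⟩ := exists_index_eq_two_of_card_eq_two_mul_prime (G := G) (p := 3)
      (by rw [Nat.card_eq_fintype_card, hcard])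
    exact hgen.index_ne_two_of_odd (by decide) H hH
  refine ⟨order_six, ?_⟩
  rintro ⟨-, G, _, _, hgen, hRH⟩
  exact order_six G (rhFormula_genus_three_zero_three_three_three_three_iff.mp hRH) hgen
end
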